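/- For a nonzero spinor ψ ∈ ℂ² and any spinor φ ∈ ℂ², the polarized quadratic form q(ψ,φ) vanishes if and only if φ is a purely imaginary real multiple of ψ, i.e. φ ∈ ℝ·(iψ). -/
import Mathlib

open Complex

/-- The Pauli matrices `σ₁, σ₂, σ₃`. -/
noncomputable def pauli : Fin 3 → Matrix (Fin 2) (Fin 2) ℂ :=
  ![!![0, 1; 1, 0], !![0, -I; I, 0], !![1, 0; 0, -1]]

/-- Clifford multiplication by the basis vectors: `c(e_j) = -i σ_j`. -/
noncomputable def cmul (j : Fin 3) : Matrix (Fin 2) (Fin 2) ℂ := (-I) • pauli j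

/-- The Hermitian inner product on `Δ = ℂ²`, complex-linear in the first entry. -/
noncomputable def inner' (ψ φ : Fin 2 → ℂ) : ℂ := ∑ j, ψ j * (starRingEnd ℂ) (φ j)

/-- Real coefficients of the polarized quadratic covector
`q(ψ,φ) = -(1/2) i Im⟨c(e_j)ψ,φ⟩ e^j`, i.e. `q(ψ,φ) = i·∑ (qPol ψ φ j) e^j`. -/
noncomputable def qPol (ψ φ : Fin 2 → ℂ) (j : Fin 3) : ℝ :=
  -(1/2) * (inner' ((cmul j).mulVec ψ) φ).im

lemma qPol0 (ψ φ : Fin 2 → ℂ) : qPol ψ φ 0 =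
    (1/2) * ((ψ 1).re*(φ 0).re + (ψ 1).im*(φ 0).im + (ψ 0).re*(φ 1).re + (ψ 0).im*(φ 1).im) := by
  simp [qPol, inner', cmul, pauli, Matrix.mulVec, dotProduct, Fin.sum_univ_two]
  ring

lemma qPol1 (ψ φ : Fin 2 → ℂ) : qPol ψ φ 1 =
    -(1/2) * (((ψ 0).im*(φ 1).re - (ψ 0).re*(φ 1).im) - ((ψ 1).im*(φ 0).re - (ψ 1).re*(φ 0).im)) := by
  simp [qPol, inner', cmul, pauli, Matrix.mulVec, dotProduct, Fin.sum_univ_two]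
  ring

lemma qPol2 (ψ φ : Fin 2 → ℂ) : qPol ψ φ 2 =
    (1/2) * ((ψ 0).re*(φ 0).re + (ψ 0).im*(φ 0).im - (ψ 1).re*(φ 1).re - (ψ 1).im*(φ 1).im) := by
  simp [qPol, inner', cmul, pauli, Matrix.mulVec, dotProduct, Fin.sum_univ_two]
  ring

lemma qPol_smul_zero (ψ : Fin 2 → ℂ) (r : ℝ) (j : Fin 3) :
    qPol ψ (r • (I • ψ)) j = 0 := by
  fin_cases j
  · show qPol ψ _ 0 = 0
    rw [qPol0]; simp [Complex.mul_re, Complex.mul_im]; ring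
  · show qPol ψ _ 1 = 0
    rw [qPol1]; simp [Complex.mul_re, Complex.mul_im]; ring
  · show qPol ψ _ 2 = 0
    rw [qPol2]; simp [Complex.mul_re, Complex.mul_im]; ring

/-- Auxiliary: the real-coordinate heart of the forward direction. -/
lemma key_real (a1 a2 b1 b2 c1 c2 d1 d2 : ℝ)
    (hN : ¬(a1 = 0 ∧ a2 = 0 ∧ b1 = 0 ∧ b2 = 0))
    (E1 : b1*c1 + b2*c2 + a1*d1 + a2*d2 = 0)
    (E2 : a2*d1 - a1*d2 - b2*c1 + b1*c2 = 0)
    (E3 : a1*c1 + a2*c2 - b1*d1 - b2*d2 = 0) :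
    ∃ r : ℝ, c1 = -(r * a2) ∧ c2 = r * a1 ∧ d1 = -(r * b2) ∧ d2 = r * b1 := by
  have hK : (a1^2+a2^2+b1^2+b2^2) * (a1*c1 + a2*c2) = 0 := by
    linear_combination (a1^2+a2^2) * E3 + (a1*b1+a2*b2) * E1 - (a1*b2-a2*b1) * E2
  have hNs : a1^2+a2^2+b1^2+b2^2 ≠ 0 := by
    intro h0
    exact hN ⟨by nlinarith, by nlinarith, by nlinarith, by nlinarith⟩
  have hRe : a1*c1 + a2*c2 = 0 := (mul_eq_zero.mp hK).resolve_left hNs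
  by_cases hA : a1 = 0 ∧ a2 = 0
  · obtain ⟨ha10, ha20⟩ := hA
    have hKb : b1^2 + b2^2 ≠ 0 := by
      intro h0
      exact hNs (by nlinarith)
    refine ⟨(b1*d2 - b2*d1)/(b1^2+b2^2), ?_, ?_, ?_, ?_⟩
    · have h' : (b1^2+b2^2) * c1 = 0 := by
        linear_combination b1*E1 - b2*E2 - (b1*d1+b2*d2)*ha10 - (b1*d2-b2*d1)*ha20
      rw [(mul_eq_zero.mp h').resolve_left hKb, ha20]; ring
    · have h' : (b1^2+b2^2) * c2 = 0 := by
        linear_combination b2*E1 + b1*E2 - (b2*d1-b1*d2)*ha10 - (b2*d2+b1*d1)*ha20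
      rw [(mul_eq_zero.mp h').resolve_left hKb, ha10]; ring
    · field_simp
      linear_combination (-b1)*E3 + (b1*c1)*ha10 + (b1*c2)*ha20
    · field_simp
      linear_combination (-b2)*E3 + (b2*c1)*ha10 + (b2*c2)*ha20
  · have hKa : a1^2 + a2^2 ≠ 0 := by
      intro h0
      exact hA ⟨by nlinarith, by nlinarith⟩
    refine ⟨(a1*c2 - a2*c1)/(a1^2+a2^2), ?_, ?_, ?_, ?_⟩
    · field_simp; linear_combination a1*hRe
    · field_simp; linear_combination a2*hRe
    · field_simp; linear_combination a1*E1 + a2*E2 - b1*hRe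
    · field_simp; linear_combination a2*E1 - a1*E2 - b2*hRe

/-- For `ψ ≠ 0`: `q(ψ,φ) = 0` iff `φ` is a real multiple of `iψ`. -/
theorem stmt4 (ψ φ : Fin 2 → ℂ) (hψ : ψ ≠ 0) :
    (∀ j, qPol ψ φ j = 0) ↔ ∃ r : ℝ, φ = r • (I • ψ) := by
  constructor
  · intro h
    have E1 := h 0; rw [qPol0] at E1
    have E2 := h 1; rw [qPol1] at E2
    have E3 := h 2; rw [qPol2] at E3
    have hN : ¬((ψ 0).re = 0 ∧ (ψ 0).im = 0 ∧ (ψ 1).re = 0 ∧ (ψ 1).im = 0) := by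
      rintro ⟨u1, u2, u3, u4⟩
      apply hψ
      funext i
      fin_cases i
      · exact Complex.ext u1 u2
      · exact Complex.ext u3 u4
    obtain ⟨r, H1, H2, H3, H4⟩ :=
      key_real (ψ 0).re (ψ 0).im (ψ 1).re (ψ 1).im (φ 0).re (φ 0).im (φ 1).re (φ 1).im
        hN (by linarith) (by linarith) (by linarith)
    refine ⟨r, ?_⟩
    funext i
    fin_cases i
    · show φ 0 = r • (I • ψ) 0
      apply Complex.ext
      · simpa [Complex.mul_re] using H1
      · simpa [Complex.mul_im] using H2
    · show φ 1 = r • (I • ψ) 1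
      apply Complex.ext
      · simpa [Complex.mul_re] using H3
      · simpa [Complex.mul_im] using H4
  · rintro ⟨r, rfl⟩
    exact qPol_smul_zero ψ r
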